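/- Let m ≥ 1 be an integer and let q be a probability distribution on ℕ with finite mean b. Then H(u^o_m, q) ≥ 1 − b/m + q(2m+1)/m, and H(u^e_m, q) ≥ 1 − (1+b)/(m+1); in each of the two inequalities, equality holds if and only if q(i) = 0 for all i ≥ 2m+2. -/

import Mathlib

open scoped BigOperators

/-- A probability distribution on ℕ. -/
def IsPMF (p : ℕ → ℝ) : Prop := (∀ i, 0 ≤ p i) ∧ (∑' i, p i) = 1

/-- `p` has (finite) mean `b`. -/
def HasMean (p : ℕ → ℝ) (b : ℝ) : Prop :=
  Summable (fun i : ℕ => (i:ℝ) * p i) ∧ (∑' i : ℕ, (i:ℝ) * p i) = b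

/-- Point mass distribution at `n`. -/
noncomputable def delta (n : ℕ) : ℕ → ℝ := fun i => if i = n then 1 else 0

/-- Uniform distribution on the `m` odd numbers `1,3,…,2m-1`. -/
noncomputable def uo (m : ℕ) : ℕ → ℝ := fun i => if Odd i ∧ i < 2*m then (1:ℝ)/m else 0

/-- Uniform distribution on the `m+1` even numbers `0,2,…,2m`. -/
noncomputable def ue (m : ℕ) : ℕ → ℝ := fun i => if Even i ∧ i ≤ 2*m then (1:ℝ)/(m+1) else 0

/-- The General Lotto payoff
`H(p,q) = Σ_{(i,j): i>j} p i · q j − Σ_{(i,j): i<j} p i · q j`. -/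
noncomputable def Hpay (p q : ℕ → ℝ) : ℝ :=
  (∑' ij : ℕ × ℕ, if ij.2 < ij.1 then p ij.1 * q ij.2 else 0)
  - (∑' ij : ℕ × ℕ, if ij.1 < ij.2 then p ij.1 * q ij.2 else 0)

/-!
Since `H(p, q) = ∑ᵢ ∑ⱼ sign (i - j) p(i) q(j)`, the payoff `H(p, q)` is the `q`-average of
the payoffs of `p` against the point masses `j`. For `u^o_m` that payoff is `max (m - j) (-m) / m`,
for `u^e_m` it is `max (m - j) (-(m + 1)) / (m + 1)`. Each is affine in `j`, except for a
`tailWeight` correction that is nonnegative and positive exactly at `j ≥ 2m + 2` (and, for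
`u^o_m`, a bump `1 / m` at `j = 2m + 1`). Averaging the affine part over `q` produces the mean
`b`, and the averaged correction vanishes iff `q` puts no mass on `{2m + 2, 2m + 3, …}`.
-/

open Finset

lemma IsPMF.summable {q : ℕ → ℝ} (hq : IsPMF q) : Summable q := by
  by_contra hs
  have h1 := hq.2
  rw [tsum_eq_zero_of_not_summable hs] at h1
  exact zero_ne_one h1

lemma intCast_sign_sub (i j : ℕ) :
    (Int.sign ((i : ℤ) - j) : ℝ) = (if j < i then 1 else 0) - (if i < j then 1 else 0) := by
  rcases lt_trichotomy i j with h | rfl | h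
  · simp [h, h.not_gt, Int.sign_eq_neg_one_of_neg (by omega : (i : ℤ) - j < 0)]
  · simp
  · simp [h, h.not_gt, Int.sign_eq_one_of_pos (by omega : 0 < (i : ℤ) - j)]

theorem Hpay_eq_tsum_sign {p q : ℕ → ℝ} (hp0 : ∀ i, 0 ≤ p i) (hp : Summable p)
    (hq0 : ∀ j, 0 ≤ q j) (hq : Summable q) :
    Hpay p q = ∑' j : ℕ, (∑' i : ℕ, (Int.sign ((i : ℤ) - j) : ℝ) * p i) * q j := by
  set F : ℕ × ℕ → ℝ := fun ij => p ij.1 * q ij.2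
  have hF : Summable F := hp.mul_of_nonneg hq hp0 hq0
  have hrestrict (P : ℕ × ℕ → Prop) [DecidablePred P] :
      Summable fun ij => if P ij then F ij else 0 :=
    hF.of_nonneg_of_le (fun ij => by split_ifs <;> simp [F, mul_nonneg, hp0, hq0])
      (fun ij => by split_ifs <;> simp [F, mul_nonneg, hp0, hq0])
  have hsign : Summable fun ij : ℕ × ℕ => (Int.sign ((ij.1 : ℤ) - ij.2) : ℝ) * F ij := by
    refine ((hrestrict fun ij => ij.2 < ij.1).sub (hrestrict fun ij => ij.1 < ij.2)).congr
      fun ij => ?_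
    rw [intCast_sign_sub]
    split_ifs <;> ring
  calc Hpay p q = ∑' ij : ℕ × ℕ, (Int.sign ((ij.1 : ℤ) - ij.2) : ℝ) * F ij := by
        rw [Hpay, ← (hrestrict _).tsum_sub (hrestrict _)]
        refine tsum_congr fun ij => ?_
        rw [intCast_sign_sub]
        split_ifs <;> ring
    _ = ∑' (j : ℕ) (i : ℕ), (Int.sign ((i : ℤ) - j) : ℝ) * (p i * q j) := by
        rw [hsign.tsum_prod, ← hsign.tsum_comm]
    _ = _ := by
        refine tsum_congr fun j => ?_
        simp_rw [← mul_assoc]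
        exact tsum_mul_right

def tailWeight (N : ℕ) (c : ℝ) (j : ℕ) : ℝ := if N ≤ j then j - c else 0

section Tail

variable {q : ℕ → ℝ} {N : ℕ} {c : ℝ}

lemma tailWeight_nonneg (hc : c ≤ N) (j : ℕ) : 0 ≤ tailWeight N c j := by
  unfold tailWeight
  split_ifs with h
  · have : (N : ℝ) ≤ j := by exact_mod_cast h
    linarith
  · exact le_rfl

lemma tsum_tailWeight_mul_nonneg (hq0 : ∀ j, 0 ≤ q j) (hc : c ≤ N) :
    0 ≤ ∑' j, tailWeight N c j * q j :=
  tsum_nonneg fun j => mul_nonneg (tailWeight_nonneg hc j) (hq0 j)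

lemma summable_tailWeight_mul (hq0 : ∀ j, 0 ≤ q j)
    (hmom : Summable fun j : ℕ => (j : ℝ) * q j) (hc0 : 0 ≤ c) (hc : c ≤ N) :
    Summable fun j => tailWeight N c j * q j := by
  refine hmom.of_nonneg_of_le (fun j => mul_nonneg (tailWeight_nonneg hc j) (hq0 j))
    fun j => mul_le_mul_of_nonneg_right ?_ (hq0 j)
  unfold tailWeight
  split_ifs
  · linarith
  · positivity

lemma tsum_tailWeight_mul_eq_zero_iff (hq0 : ∀ j, 0 ≤ q j)
    (hmom : Summable fun j : ℕ => (j : ℝ) * q j) (hc0 : 0 ≤ c) (hc : c < N) :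
    ∑' j, tailWeight N c j * q j = 0 ↔ ∀ j, N ≤ j → q j = 0 := by
  have hnonneg j : 0 ≤ tailWeight N c j * q j :=
    mul_nonneg (tailWeight_nonneg hc.le j) (hq0 j)
  have hsum := summable_tailWeight_mul hq0 hmom hc0 hc.le
  rw [← hsum.hasSum_iff, hasSum_zero_iff_of_nonneg hnonneg, funext_iff]
  refine forall_congr' fun j => ?_
  unfold tailWeight
  split_ifs with h
  · have : (N : ℝ) ≤ j := by exact_mod_cast h
    simp only [Pi.zero_apply, mul_eq_zero, sub_eq_zero, h, true_imp_iff]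
    exact or_iff_right (by linarith)
  · simp [h]

end Tail

lemma tsum_affine_add_mul {q : ℕ → ℝ} {b : ℝ} (hq : IsPMF q) (hmean : HasMean q b) (a r : ℝ)
    (t : ℕ) {e : ℕ → ℝ} (he : Summable fun j => e j * q j) :
    ∑' j : ℕ, (a - j + (if j = t then r else 0) + e j) * q j =
      a - b + r * q t + ∑' j, e j * q j := by
  have hpoint : Summable fun j => if j = t then r * q t else 0 :=
    (hasSum_ite_eq t _).summable
  calc ∑' j : ℕ, (a - j + (if j = t then r else 0) + e j) * q j
      = ∑' j : ℕ, (a * q j - j * q j + (if j = t then r * q t else 0) + e j * q j) := by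
        refine tsum_congr fun j => ?_
        split_ifs with h
        · rw [h]; ring
        · ring
    _ = _ := by
        rw [(((hq.summable.mul_left a).sub hmean.1).add hpoint).tsum_add he,
          ((hq.summable.mul_left a).sub hmean.1).tsum_add hpoint,
          (hq.summable.mul_left a).tsum_sub hmean.1, tsum_mul_left, hq.2, hmean.2, tsum_ite_eq,
          mul_one]

lemma tsum_mul_uo (g : ℕ → ℝ) (m : ℕ) :
    ∑' i, g i * uo m i = (∑ k ∈ range m, g (2 * k + 1)) / m := by
  rw [tsum_eq_sum (s := (range m).image fun k => 2 * k + 1), sum_image (by simp),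
    sum_div]
  · refine sum_congr rfl fun k hk => ?_
    rw [uo, if_pos ⟨odd_two_mul_add_one k, by simp at hk; omega⟩, mul_one_div]
  · rintro i hi
    rw [uo, if_neg, mul_zero]
    rintro ⟨⟨k, rfl⟩, hlt⟩
    exact hi (mem_image.2 ⟨k, mem_range.2 (by omega), rfl⟩)

lemma tsum_mul_ue (g : ℕ → ℝ) (m : ℕ) :
    ∑' i, g i * ue m i = (∑ k ∈ range (m + 1), g (2 * k)) / (m + 1) := by
  rw [tsum_eq_sum (s := (range (m + 1)).image fun k => 2 * k), sum_image (by simp),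
    sum_div]
  · refine sum_congr rfl fun k hk => ?_
    rw [ue, if_pos ⟨even_two_mul k, by simp at hk; omega⟩, mul_one_div]
  · rintro i hi
    rw [ue, if_neg, mul_zero]
    rintro ⟨⟨k, rfl⟩, hle⟩
    exact hi (mem_image.2 ⟨k, mem_range.2 (by omega), by ring⟩)

lemma Int.sign_cases (z : ℤ) :
    (z < 0 ∧ z.sign = -1) ∨ (z = 0 ∧ z.sign = 0) ∨ (0 < z ∧ z.sign = 1) := by
  rcases lt_trichotomy z 0 with h | rfl | h
  · exact Or.inl ⟨h, Int.sign_eq_neg_one_of_neg h⟩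
  · simp
  · exact Or.inr (Or.inr ⟨h, Int.sign_eq_one_of_pos h⟩)

lemma sum_range_sign_odd_sub (m j : ℕ) :
    ∑ k ∈ range m, Int.sign (2 * k + 1 - j) = max ((m : ℤ) - j) (-m) := by
  induction m with
  | zero => simp
  | succ m ih =>
    rw [sum_range_succ, ih]
    rcases Int.sign_cases (2 * m + 1 - j) with ⟨h, hs⟩ | ⟨h, hs⟩ | ⟨h, hs⟩ <;>
      rw [hs] <;> omega

lemma sum_range_sign_even_sub (m j : ℕ) :
    ∑ k ∈ range (m + 1), Int.sign (2 * k - j) = max ((m : ℤ) - j) (-(m + 1)) := by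
  induction m with
  | zero =>
    rcases Int.sign_cases (-j) with ⟨h, hs⟩ | ⟨h, hs⟩ | ⟨h, hs⟩ <;> simp [hs] <;> omega
  | succ m ih =>
    rw [sum_range_succ, ih]
    rcases Int.sign_cases (2 * (m + 1) - j) with ⟨h, hs⟩ | ⟨h, hs⟩ | ⟨h, hs⟩ <;>
      push_cast <;> rw [hs] <;> omega

lemma tsum_sign_sub_mul_uo (m j : ℕ) :
    ∑' i : ℕ, (Int.sign ((i : ℤ) - j) : ℝ) * uo m i =
      (max ((m : ℤ) - j) (-m) : ℤ) / m := by
  rw [tsum_mul_uo, ← sum_range_sign_odd_sub, Int.cast_sum]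
  push_cast
  rfl

lemma tsum_sign_sub_mul_ue (m j : ℕ) :
    ∑' i : ℕ, (Int.sign ((i : ℤ) - j) : ℝ) * ue m i =
      (max ((m : ℤ) - j) (-(m + 1)) : ℤ) / (m + 1) := by
  rw [tsum_mul_ue, ← sum_range_sign_even_sub, Int.cast_sum]
  push_cast
  rfl

lemma intCast_max_sub_odd (m j : ℕ) :
    ((max ((m : ℤ) - j) (-m) : ℤ) : ℝ) =
      m - j + (if j = 2 * m + 1 then 1 else 0) + tailWeight (2 * m + 2) (2 * m) j := by
  have h : max ((m : ℤ) - j) (-m) =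
      m - j + (if j = 2 * m + 1 then 1 else 0) +
        (if 2 * m + 2 ≤ j then (j : ℤ) - 2 * m else 0) := by
    split_ifs <;> omega
  rw [h, tailWeight]
  push_cast
  rfl

lemma intCast_max_sub_even (m j : ℕ) :
    ((max ((m : ℤ) - j) (-(m + 1)) : ℤ) : ℝ) =
      m - j + tailWeight (2 * m + 2) (2 * m + 1) j := by
  have h : max ((m : ℤ) - j) (-(m + 1)) =
      m - j + (if 2 * m + 2 ≤ j then (j : ℤ) - (2 * m + 1) else 0) := by
    split_ifs <;> omega
  rw [h, tailWeight]
  push_cast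
  rfl

section Hpay

variable {q : ℕ → ℝ} {b : ℝ}

theorem Hpay_uo_eq (hq : IsPMF q) (hmean : HasMean q b) {m : ℕ} (hm : m ≠ 0) :
    Hpay (uo m) q = 1 - b / m + q (2 * m + 1) / m +
      (∑' j, tailWeight (2 * m + 2) (2 * m) j * q j) / m := by
  have huo0 i : 0 ≤ uo m i := by unfold uo; split_ifs <;> positivity
  have huo : Summable (uo m) := summable_of_ne_finset_zero (s := range (2 * m)) fun i hi => by
    rw [uo, if_neg fun h => hi (mem_range.2 h.2)]
  have htail := summable_tailWeight_mul hq.1 hmean.1 (c := 2 * m) (N := 2 * m + 2)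
    (by positivity) (by push_cast; linarith)
  rw [Hpay_eq_tsum_sign huo0 huo hq.1 hq.summable]
  simp_rw [tsum_sign_sub_mul_uo, intCast_max_sub_odd, div_mul_eq_mul_div]
  rw [tsum_div_const, tsum_affine_add_mul hq hmean _ _ _ htail]
  field_simp

theorem Hpay_ue_eq (hq : IsPMF q) (hmean : HasMean q b) (m : ℕ) :
    Hpay (ue m) q = 1 - (1 + b) / (m + 1) +
      (∑' j, tailWeight (2 * m + 2) (2 * m + 1) j * q j) / (m + 1) := by
  have hue0 i : 0 ≤ ue m i := by unfold ue; split_ifs <;> positivity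
  have hue : Summable (ue m) :=
    summable_of_ne_finset_zero (s := range (2 * m + 1)) fun i hi => by
    rw [ue, if_neg fun h => hi (mem_range.2 (by omega))]
  have htail := summable_tailWeight_mul hq.1 hmean.1 (c := 2 * m + 1) (N := 2 * m + 2)
    (by positivity) (by push_cast; linarith)
  rw [Hpay_eq_tsum_sign hue0 hue hq.1 hq.summable]
  simp_rw [tsum_sign_sub_mul_ue, intCast_max_sub_even, div_mul_eq_mul_div]
  have haffine := tsum_affine_add_mul hq hmean m 0 0 htail
  simp only [ite_self, add_zero, zero_mul] at haffine
  rw [tsum_div_const, haffine]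
  field_simp
  ring

end Hpay

/-- lower bounds on H(u^o_m, q) and H(u^e_m, q) for q with mean b,
with equality in each iff q vanishes on {2m+2, 2m+3, …}. -/
theorem stmt14 (m : ℕ) (hm : 1 ≤ m) (q : ℕ → ℝ) (b : ℝ)
    (hq : IsPMF q) (hmean : HasMean q b) :
    (1 - b/(m:ℝ) + q (2*m+1)/(m:ℝ) ≤ Hpay (uo m) q) ∧
    (Hpay (uo m) q = 1 - b/(m:ℝ) + q (2*m+1)/(m:ℝ) ↔ ∀ i, 2*m+2 ≤ i → q i = 0) ∧
    (1 - (1+b)/((m:ℝ)+1) ≤ Hpay (ue m) q) ∧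
    (Hpay (ue m) q = 1 - (1+b)/((m:ℝ)+1) ↔ ∀ i, 2*m+2 ≤ i → q i = 0) := by
  have hm0 : (0 : ℝ) < m := by exact_mod_cast hm
  have hm1 : (0 : ℝ) < m + 1 := by positivity
  have hodd0 := tsum_tailWeight_mul_nonneg hq.1 (N := 2 * m + 2) (c := 2 * m)
    (by push_cast; linarith)
  have heven0 := tsum_tailWeight_mul_nonneg hq.1 (N := 2 * m + 2) (c := 2 * m + 1)
    (by push_cast; linarith)
  have hodd := tsum_tailWeight_mul_eq_zero_iff hq.1 hmean.1 (N := 2 * m + 2) (c := 2 * m)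
    (by positivity) (by push_cast; linarith)
  have heven := tsum_tailWeight_mul_eq_zero_iff hq.1 hmean.1 (N := 2 * m + 2) (c := 2 * m + 1)
    (by positivity) (by push_cast; linarith)
  rw [Hpay_uo_eq hq hmean (by omega), Hpay_ue_eq hq hmean, add_eq_left, add_eq_left,
    div_eq_zero_iff, div_eq_zero_iff, or_iff_left hm0.ne', or_iff_left hm1.ne', hodd, heven]
  exact ⟨le_add_of_nonneg_right (div_nonneg hodd0 hm0.le), Iff.rfl,
    le_add_of_nonneg_right (div_nonneg heven0 hm1.le), Iff.rfl⟩
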